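/- arXiv:2202.05757 — 4 statements merged into one kernel-verified Lean document; each statement's English description precedes it below -/
import Mathlib

section
/- For every natural number n ≥ 1, the three-dimensional Catalan number 2·(3n)!/(n!·(n+1)!·(n+2)!) is a natural number (i.e., n!·(n+1)!·(n+2)! divides 2·(3n)!). -/
/-- Multinomial identity: `a!·b!·c!· (C(a+b+c,a)·C(b+c,b)) = (a+b+c)!`. -/
lemma aux_multinomial (a b c : ℕ) :
    a.factorial * b.factorial * c.factorial *
      ((a + b + c).choose (b + c) * (b + c).choose c) = (a + b + c).factorial := by
  have h1 := Nat.add_choose_mul_factorial_mul_factorial a (b + c)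
  have h2 := Nat.add_choose_mul_factorial_mul_factorial b c
  rw [← add_assoc] at h1
  calc a.factorial * b.factorial * c.factorial *
        ((a + b + c).choose (b + c) * (b + c).choose c)
      = (a + b + c).choose (b + c) * a.factorial *
          ((b + c).choose c * b.factorial * c.factorial) := by ring
    _ = (a + b + c).choose (b + c) * a.factorial * (b + c).factorial := by rw [h2]
    _ = (a + b + c).factorial := h1

/-- For every natural number `n ≥ 1`, the three-dimensional Catalan number
`2·(3n)!/(n!·(n+1)!·(n+2)!)` is a natural number, i.e.
`n!·(n+1)!·(n+2)!` divides `2·(3n)!`. -/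
theorem stmt_0 (n : ℕ) (hn : 1 ≤ n) :
    n.factorial * (n + 1).factorial * (n + 2).factorial ∣ 2 * (3 * n).factorial := by
  rcases n with _ | _ | m
  · omega
  · decide
  -- now n = m + 2
  set F : ℕ := (3 * (m + 2)).factorial with hF
  have hsum : ∀ a b c : ℕ, a + b + c = 3 * (m + 2) →
      a.factorial * b.factorial * c.factorial *
        ((3 * (m + 2)).choose (b + c) * (b + c).choose c) = F := by
    intro a b c h
    have := aux_multinomial a b c
    rw [h] at this
    exact this
  -- factorial expansion facts
  have f1 : (m + 1).factorial = (m + 1) * m.factorial := rfl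
  have f2 : (m + 2).factorial = (m + 2) * (m + 1).factorial := rfl
  have f3 : (m + 3).factorial = (m + 3) * (m + 2).factorial := rfl
  have f4 : (m + 4).factorial = (m + 4) * (m + 3).factorial := rfl
  set D : ℕ := (m + 2).factorial * (m + 2 + 1).factorial * (m + 2 + 2).factorial with hD
  have hD' : D = (m + 2).factorial * (m + 3).factorial * (m + 4).factorial := by
    norm_num [hD]
  -- the five multinomial terms
  set M1 : ℕ := (3 * (m + 2)).choose ((m + 2) + (m + 2)) * ((m + 2) + (m + 2)).choose (m + 2) with hM1
  set M2 : ℕ := (3 * (m + 2)).choose ((m + 2) + (m + 1)) * ((m + 2) + (m + 1)).choose (m + 1) with hM2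
  set M3 : ℕ := (3 * (m + 2)).choose ((m + 2) + m) * ((m + 2) + m).choose m with hM3
  set M4 : ℕ := (3 * (m + 2)).choose ((m + 3) + m) * ((m + 3) + m).choose m with hM4
  set M5 : ℕ := (3 * (m + 2)).choose ((m + 1) + (m + 1)) * ((m + 1) + (m + 1)).choose (m + 1) with hM5
  have e1 : D * M1 = ((m + 3) * (m + 3) * (m + 4)) * F := by
    have h := hsum (m + 2) (m + 2) (m + 2) (by ring)
    calc D * M1 = ((m + 3) * (m + 3) * (m + 4)) *
          ((m + 2).factorial * (m + 2).factorial * (m + 2).factorial * M1) := by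
            rw [hD', f4, f3]; ring
      _ = ((m + 3) * (m + 3) * (m + 4)) * F := by rw [hM1, h]
  have e2 : D * M2 = ((m + 2) * (m + 3) * (m + 4)) * F := by
    have h := hsum (m + 3) (m + 2) (m + 1) (by ring)
    calc D * M2 = ((m + 2) * (m + 3) * (m + 4)) *
          ((m + 3).factorial * (m + 2).factorial * (m + 1).factorial * M2) := by
            rw [hD', f4, f3, f2]; ring
      _ = ((m + 2) * (m + 3) * (m + 4)) * F := by rw [hM2, h]
  have e3 : D * M3 = ((m + 1) * (m + 2) * (m + 3)) * F := by
    have h := hsum (m + 4) (m + 2) m (by ring)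
    calc D * M3 = ((m + 1) * (m + 2) * (m + 3)) *
          ((m + 4).factorial * (m + 2).factorial * m.factorial * M3) := by
            rw [hD', f3, f2, f1]; ring
      _ = ((m + 1) * (m + 2) * (m + 3)) * F := by rw [hM3, h]
  have e4 : D * M4 = ((m + 1) * (m + 2) * (m + 4)) * F := by
    have h := hsum (m + 3) (m + 3) m (by ring)
    calc D * M4 = ((m + 1) * (m + 2) * (m + 4)) *
          ((m + 3).factorial * (m + 3).factorial * m.factorial * M4) := by
            rw [hD', f4, f3, f2, f1]; ring
      _ = ((m + 1) * (m + 2) * (m + 4)) * F := by rw [hM4, h]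
  have e5 : D * M5 = ((m + 2) * (m + 2) * (m + 3)) * F := by
    have h := hsum (m + 4) (m + 1) (m + 1) (by ring)
    calc D * M5 = ((m + 2) * (m + 2) * (m + 3)) *
          ((m + 4).factorial * (m + 1).factorial * (m + 1).factorial * M5) := by
            rw [hD', f4, f3, f2, f1]; ring
      _ = ((m + 2) * (m + 2) * (m + 3)) * F := by rw [hM5, h]
  -- conclude over ℤ
  rw [show (m + 2 : ℕ) = m + 1 + 1 from rfl, show (m + 2 + 2 : ℕ) = m + 1 + 1 + 2 from rfl,
    show (m + 2 + 1 : ℕ) = m + 1 + 1 + 1 from rfl] at hD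
  have goal_int : (D : ℤ) ∣ 2 * (F : ℤ) := by
    refine ⟨(M1 : ℤ) - 2 * M2 - M3 + M4 + M5, ?_⟩
    have e1' : (D : ℤ) * M1 = ((m + 3) * (m + 3) * (m + 4)) * F := by exact_mod_cast congrArg (Nat.cast : ℕ → ℤ) e1
    have e2' : (D : ℤ) * M2 = ((m + 2) * (m + 3) * (m + 4)) * F := by exact_mod_cast congrArg (Nat.cast : ℕ → ℤ) e2
    have e3' : (D : ℤ) * M3 = ((m + 1) * (m + 2) * (m + 3)) * F := by exact_mod_cast congrArg (Nat.cast : ℕ → ℤ) e3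
    have e4' : (D : ℤ) * M4 = ((m + 1) * (m + 2) * (m + 4)) * F := by exact_mod_cast congrArg (Nat.cast : ℕ → ℤ) e4
    have e5' : (D : ℤ) * M5 = ((m + 2) * (m + 2) * (m + 3)) * F := by exact_mod_cast congrArg (Nat.cast : ℕ → ℤ) e5
    linear_combination -e1' + 2 * e2' + e3' - e4' - e5'
  have : (((m + 1 + 1).factorial * (m + 1 + 1 + 1).factorial * (m + 1 + 1 + 2).factorial : ℕ) : ℤ)
      ∣ ((2 * (3 * (m + 1 + 1)).factorial : ℕ) : ℤ) := by
    push_cast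
    convert goal_int using 2
    exact_mod_cast hD.symm
  exact_mod_cast this
end

section
/- For every natural number n, the sum over k from 0 to n of C(n,k), where C(n,k) = binom(n+k,k) − binom(n+k,k−1), equals the Catalan number Cat(n+1) = binom(2n+2, n+1)/(n+2). -/
/-- Ballot numbers: `C(n,k) = binom(n+k,k) − binom(n+k,k−1)`, with the convention
`binom(m,−1) = 0`. -/
def ballotC (n k : ℕ) : ℤ :=
  ((n + k).choose k : ℤ) - (if k = 0 then 0 else ((n + k).choose (k - 1) : ℤ))

lemma sum_ballot (n m : ℕ) :
    ∑ k ∈ Finset.range (m + 1), ballotC n k = ballotC (n + 1) m := by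
  induction m with
  | zero => simp [ballotC]
  | succ m ih =>
    rw [Finset.sum_range_succ, ih]
    unfold ballotC
    rcases Nat.eq_zero_or_pos m with hm | hm
    · subst hm
      simp [Nat.choose_one_right]
      ring
    · obtain ⟨m', rfl⟩ := Nat.exists_eq_succ_of_ne_zero hm.ne'
      simp only [Nat.succ_ne_zero, if_false, Nat.succ_sub_one]
      have h1 : n + 1 + (m' + 1 + 1) = (n + (m' + 1 + 1)) + 1 := by ring
      rw [h1, Nat.choose_succ_succ (n + (m' + 1 + 1)) (m' + 1),
        Nat.choose_succ_succ (n + (m' + 1 + 1)) m']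
      have h2 : n + 1 + (m' + 1) = n + (m' + 1 + 1) := by ring
      rw [h2]
      push_cast
      ring

/-- The row sum of the Catalan triangle: `∑_{k=0}^{n} C(n,k) = Cat(n+1) = binom(2n+2,n+1)/(n+2)`,
stated as the exact identity `(∑_{k=0}^{n} C(n,k))·(n+2) = binom(2n+2,n+1)`. -/
theorem stmt_5 (n : ℕ) :
    (∑ k ∈ Finset.range (n + 1), ballotC n k) * ((n : ℤ) + 2) =
      ((2 * n + 2).choose (n + 1) : ℤ) := by
  rw [sum_ballot]
  unfold ballotC
  have hsymm : (2 * n + 2).choose (n + 1) = 2 * (2 * n + 1).choose n := by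
    have : 2 * n + 2 = (2 * n + 1) + 1 := by ring
    rw [this, Nat.choose_succ_succ' (2 * n + 1) n]
    have : (2 * n + 1).choose (n + 1) = (2 * n + 1).choose n := by
      have h := Nat.choose_symm (show n + 1 ≤ 2 * n + 1 by omega)
      have h2 : 2 * n + 1 - (n + 1) = n := by omega
      rw [h2] at h; omega
    omega
  rcases Nat.eq_zero_or_pos n with hn | hn
  · subst hn; simp [ballotC]
  · obtain ⟨n', rfl⟩ := Nat.exists_eq_succ_of_ne_zero hn.ne'
    simp only [Nat.succ_ne_zero, if_false, Nat.succ_sub_one]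
    have key : (2 * (n' + 1) + 1).choose (n' + 1) * (n' + 1) =
        (2 * (n' + 1) + 1).choose n' * ((n' + 1) + 2) := by
      have := Nat.choose_succ_right_eq (2 * (n' + 1) + 1) n'
      have harith : 2 * (n' + 1) + 1 - n' = (n' + 1) + 2 := by omega
      rw [harith] at this
      omega
    have harg : n' + 1 + 1 + (n' + 1) = 2 * (n' + 1) + 1 := by ring
    rw [harg]
    have hk : ((2 * (n' + 1) + 1).choose (n' + 1) : ℤ) * (n' + 1) =
        ((2 * (n' + 1) + 1).choose n' : ℤ) * ((n' + 1) + 2) := by exact_mod_cast key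
    have hs : ((2 * (n' + 1) + 2).choose (n' + 1 + 1) : ℤ) =
        2 * ((2 * (n' + 1) + 1).choose (n' + 1) : ℤ) := by
      have h2 : 2 * (n' + 1) + 2 = 2 * (n' + 1 + 1) := by ring
      rw [h2]; exact_mod_cast hsymm
    push_cast at hk hs ⊢
    linarith [hk, hs]
end

section
/- For every natural number n ≥ 1, the number of standard Young tableaux of rectangular shape 2×n equals the Catalan number (2n)!/((n+1)!·n!). -/
/-- A standard Young tableau of rectangular shape `2×n`, encoded as a bijective filling of the
`2×n` array with `1..2n` (here `Fin (2*n)`), strictly increasing along each row and column. -/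
def IsStandard2xn (n : ℕ) (f : Fin 2 × Fin n → Fin (2 * n)) : Prop :=
  Function.Bijective f ∧
    (∀ (i : Fin 2) (j j' : Fin n), j < j' → f (i, j) < f (i, j')) ∧
    (∀ (i i' : Fin 2) (j : Fin n), i < i' → f (i, j) < f (i', j))

namespace SYT2xnAux

open List DyckStep Finset

/-- countP of a prefix as a Finset card. -/
lemma countP_take {α : Type*} [Inhabited α] (l : List α) (p : α → Bool) :
    ∀ m, m ≤ l.length →
      (l.take m).countP p =
        ((Finset.range m).filter (fun k => p (l.getD k default))).card := by
  intro m
  induction m with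
  | zero => simp
  | succ m ih =>
    intro hm
    have hm' : m ≤ l.length := by omega
    have hml : m < l.length := by omega
    rw [List.take_succ, List.countP_append, ih hm', Finset.range_add_one,
      Finset.filter_insert]
    by_cases h : p (l.getD m default)
    · rw [if_pos h, Finset.card_insert_of_notMem (by simp),
        List.getElem?_eq_getElem hml]
      rw [List.getD_eq_getElem l default hml] at h
      simp [h]
    · rw [if_neg h, List.getElem?_eq_getElem hml]
      rw [List.getD_eq_getElem l default hml] at h
      simp [h]

/-- count of a prefix of a list of Dyck steps as a Finset card. -/
lemma count_take_card (l : List DyckStep) (s : DyckStep) (m : ℕ) (hm : m ≤ l.length) :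
    (l.take m).count s = ((Finset.range m).filter (fun k => l.getD k default = s)).card := by
  rw [show (l.take m).count s = (l.take m).countP (· == s) from rfl, countP_take l _ m hm]
  congr 1
  ext k
  simp

variable {n : ℕ}

lemma emb_congr (s t : Finset ℕ) (hst : s = t) (hs : s.card = n) (ht : t.card = n)
    (j : Fin n) : s.orderEmbOfFin hs j = t.orderEmbOfFin ht j := by
  subst hst; rfl

/-- The step at position `k`: `U` if the entry `k` of the tableau lies in row 0. -/
noncomputable def stepOf (f : Fin 2 × Fin n → Fin (2 * n)) (hf : Function.Bijective f)
    (k : ℕ) : DyckStep :=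
  if hk : k < 2 * n then
    (if ((Equiv.ofBijective f hf).symm ⟨k, hk⟩).1 = 0 then U else D)
  else U

noncomputable def listOf (f : Fin 2 × Fin n → Fin (2 * n)) (hf : Function.Bijective f) :
    List DyckStep :=
  (List.range (2 * n)).map (stepOf f hf)

lemma length_listOf (f : Fin 2 × Fin n → Fin (2 * n)) (hf : Function.Bijective f) :
    (listOf f hf).length = 2 * n := by simp [listOf]

lemma getD_listOf (f : Fin 2 × Fin n → Fin (2 * n)) (hf : Function.Bijective f)
    {k : ℕ} (hk : k < 2 * n) : (listOf f hf).getD k default = stepOf f hf k := by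
  rw [List.getD_eq_getElem _ _ (by simpa [length_listOf])]
  simp [listOf]

lemma stepOf_eq_iff (f : Fin 2 × Fin n → Fin (2 * n)) (hf : Function.Bijective f)
    {k : ℕ} (hk : k < 2 * n) (i : Fin 2) :
    stepOf f hf k = (if i = 0 then U else D) ↔
      ((Equiv.ofBijective f hf).symm ⟨k, hk⟩).1 = i := by
  unfold stepOf
  rw [dif_pos hk]
  have hx : ((Equiv.ofBijective f hf).symm ⟨k, hk⟩).1 = 0 ∨
      ((Equiv.ofBijective f hf).symm ⟨k, hk⟩).1 = 1 := by omega
  have hi : i = 0 ∨ i = 1 := by omega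
  rcases hx with hx | hx <;> rcases hi with rfl | rfl <;> simp [hx]

/-- Key counting lemma: counts of `U`/`D` in prefixes of `listOf` correspond to
entries of row `0`/`1` below the threshold. -/
lemma count_take (f : Fin 2 × Fin n → Fin (2 * n)) (hf : Function.Bijective f)
    (i : Fin 2) (m : ℕ) (hm : m ≤ 2 * n) :
    ((listOf f hf).take m).count (if i = 0 then U else D) =
      (Finset.univ.filter (fun j : Fin n => ((f (i, j)) : ℕ) < m)).card := by
  rw [count_take_card _ _ m (by rw [length_listOf]; exact hm)]
  have himg : (Finset.range m).filter
        (fun k => (listOf f hf).getD k default = (if i = 0 then U else D)) =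
      (Finset.univ.filter (fun j : Fin n => ((f (i, j)) : ℕ) < m)).image
        (fun j => ((f (i, j)) : ℕ)) := by
    ext k
    simp only [Finset.mem_filter, Finset.mem_range, Finset.mem_image, Finset.mem_univ,
      true_and]
    constructor
    · rintro ⟨hkm, hstep⟩
      have hk : k < 2 * n := lt_of_lt_of_le hkm hm
      rw [getD_listOf f hf hk, stepOf_eq_iff f hf hk i] at hstep
      refine ⟨((Equiv.ofBijective f hf).symm ⟨k, hk⟩).2, ?_, ?_⟩ <;>
      · have : f (i, ((Equiv.ofBijective f hf).symm ⟨k, hk⟩).2) = ⟨k, hk⟩ := by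
          rw [show (i, ((Equiv.ofBijective f hf).symm ⟨k, hk⟩).2)
              = (Equiv.ofBijective f hf).symm ⟨k, hk⟩ from by
            rw [← hstep]]
          exact (Equiv.ofBijective f hf).apply_symm_apply _
        simp [this, hkm]
    · rintro ⟨j, hjm, rfl⟩
      have hk : ((f (i, j)) : ℕ) < 2 * n := (f (i, j)).2
      refine ⟨hjm, ?_⟩
      rw [getD_listOf f hf hk, stepOf_eq_iff f hf hk i]
      have : (⟨((f (i, j)) : ℕ), hk⟩ : Fin (2 * n)) = f (i, j) := by ext; rfl
      rw [this, Equiv.ofBijective_symm_apply_apply]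
  rw [himg, Finset.card_image_of_injective]
  intro a b hab
  have : f (i, a) = f (i, b) := Fin.ext hab
  exact (Prod.mk.injEq _ _ _ _).mp (hf.1 this) |>.2

lemma count_take_U (f : Fin 2 × Fin n → Fin (2 * n)) (hf : Function.Bijective f)
    (m : ℕ) (hm : m ≤ 2 * n) :
    ((listOf f hf).take m).count U =
      (Finset.univ.filter (fun j : Fin n => ((f (0, j)) : ℕ) < m)).card := by
  have h := count_take f hf 0 m hm
  rwa [if_pos (rfl : (0 : Fin 2) = 0)] at h

lemma count_take_D (f : Fin 2 × Fin n → Fin (2 * n)) (hf : Function.Bijective f)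
    (m : ℕ) (hm : m ≤ 2 * n) :
    ((listOf f hf).take m).count D =
      (Finset.univ.filter (fun j : Fin n => ((f (1, j)) : ℕ) < m)).card := by
  have h := count_take f hf 1 m hm
  rwa [if_neg (show ¬ (1 : Fin 2) = 0 by decide)] at h

lemma count_full_U (f : Fin 2 × Fin n → Fin (2 * n)) (hf : Function.Bijective f) :
    (listOf f hf).count U = n := by
  have h := count_take_U f hf (2 * n) le_rfl
  rw [List.take_of_length_le (by rw [length_listOf])] at h
  rw [h, Finset.filter_true_of_mem (fun j _ => (f (0, j)).2), Finset.card_univ,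
    Fintype.card_fin]

lemma count_full_D (f : Fin 2 × Fin n → Fin (2 * n)) (hf : Function.Bijective f) :
    (listOf f hf).count D = n := by
  have h := count_take_D f hf (2 * n) le_rfl
  rw [List.take_of_length_le (by rw [length_listOf])] at h
  rw [h, Finset.filter_true_of_mem (fun j _ => (f (1, j)).2), Finset.card_univ,
    Fintype.card_fin]

/-- The Dyck word associated to a standard tableau. -/
noncomputable def dyckOf (f : Fin 2 × Fin n → Fin (2 * n)) (hf : IsStandard2xn n f) :
    DyckWord where
  toList := listOf f hf.1
  count_U_eq_count_D := by rw [count_full_U f hf.1, count_full_D f hf.1]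
  count_D_le_count_U := by
    intro m
    rcases le_or_gt m (2 * n) with hm | hm
    · rw [count_take_U f hf.1 m hm, count_take_D f hf.1 m hm]
      apply Finset.card_le_card
      intro j hj
      simp only [Finset.mem_filter, Finset.mem_univ, true_and] at hj ⊢
      have hcol : f (0, j) < f (1, j) := hf.2.2 0 1 j (by decide)
      have hcol' : ((f (0, j)) : ℕ) < ((f (1, j)) : ℕ) := hcol
      omega
    · rw [List.take_of_length_le (by rw [length_listOf]; omega),
        count_full_U f hf.1, count_full_D f hf.1]

lemma semilength_dyckOf (f : Fin 2 × Fin n → Fin (2 * n)) (hf : IsStandard2xn n f) :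
    (dyckOf f hf).semilength = n :=
  count_full_U f hf.1

/-- The map from standard tableaux to Dyck words of semilength `n`. -/
noncomputable def Phi : {f : Fin 2 × Fin n → Fin (2 * n) // IsStandard2xn n f} →
    {p : DyckWord // p.semilength = n} :=
  fun x => ⟨dyckOf x.1 x.2, semilength_dyckOf x.1 x.2⟩

/-- The set of positions of row `i`. -/
noncomputable def rowSet (f : Fin 2 × Fin n → Fin (2 * n)) (hf : Function.Bijective f)
    (i : Fin 2) : Finset ℕ :=
  (Finset.range (2 * n)).filter (fun k =>
    ∃ hk : k < 2 * n, ((Equiv.ofBijective f hf).symm ⟨k, hk⟩).1 = i)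

lemma rowSet_eq_image (f : Fin 2 × Fin n → Fin (2 * n)) (hf : Function.Bijective f)
    (i : Fin 2) :
    rowSet f hf i = Finset.univ.image (fun j : Fin n => ((f (i, j)) : ℕ)) := by
  ext k
  simp only [rowSet, Finset.mem_filter, Finset.mem_range, Finset.mem_image, Finset.mem_univ,
    true_and]
  constructor
  · rintro ⟨hk, hk2, hrow⟩
    refine ⟨((Equiv.ofBijective f hf).symm ⟨k, hk2⟩).2, ?_⟩
    have : f (i, ((Equiv.ofBijective f hf).symm ⟨k, hk2⟩).2) = ⟨k, hk2⟩ := by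
      rw [show (i, ((Equiv.ofBijective f hf).symm ⟨k, hk2⟩).2)
          = (Equiv.ofBijective f hf).symm ⟨k, hk2⟩ from by rw [← hrow]]
      exact (Equiv.ofBijective f hf).apply_symm_apply _
    simp [this]
  · rintro ⟨j, rfl⟩
    have hk : ((f (i, j)) : ℕ) < 2 * n := (f (i, j)).2
    refine ⟨hk, hk, ?_⟩
    have : (⟨((f (i, j)) : ℕ), hk⟩ : Fin (2 * n)) = f (i, j) := by ext; rfl
    rw [this, Equiv.ofBijective_symm_apply_apply]

lemma card_rowSet (f : Fin 2 × Fin n → Fin (2 * n)) (hf : Function.Bijective f) (i : Fin 2) :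
    (rowSet f hf i).card = n := by
  rw [rowSet_eq_image, Finset.card_image_of_injective, Finset.card_univ, Fintype.card_fin]
  intro a b hab
  have : f (i, a) = f (i, b) := Fin.ext hab
  exact (Prod.mk.injEq _ _ _ _).mp (hf.1 this) |>.2

lemma row_apply_eq_orderEmbOfFin (f : Fin 2 × Fin n → Fin (2 * n))
    (hf : IsStandard2xn n f) (i : Fin 2) (j : Fin n) :
    ((f (i, j)) : ℕ) = (rowSet f hf.1 i).orderEmbOfFin (card_rowSet f hf.1 i) j := by
  have := Finset.orderEmbOfFin_unique (card_rowSet f hf.1 i)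
    (f := fun j : Fin n => ((f (i, j)) : ℕ))
    (fun j => by rw [rowSet_eq_image]; exact Finset.mem_image_of_mem _ (Finset.mem_univ j))
    (fun a b hab => by exact_mod_cast hf.2.1 i a b hab)
  exact congrFun this j

lemma Phi_injective : Function.Injective (Phi (n := n)) := by
  rintro ⟨f, hf⟩ ⟨f', hf'⟩ h
  have hlist : listOf f hf.1 = listOf f' hf'.1 := congrArg (fun q => q.1.toList) h
  have hstep : ∀ k < 2 * n, stepOf f hf.1 k = stepOf f' hf'.1 k := by
    intro k hk
    have := List.map_eq_map_iff.mp hlist k (by simpa using hk)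
    exact this
  have hrow : ∀ (k : ℕ) (hk : k < 2 * n) (i : Fin 2),
      ((Equiv.ofBijective f hf.1).symm ⟨k, hk⟩).1 = i ↔
        ((Equiv.ofBijective f' hf'.1).symm ⟨k, hk⟩).1 = i := by
    intro k hk i
    rw [← stepOf_eq_iff f hf.1 hk i, ← stepOf_eq_iff f' hf'.1 hk i, hstep k hk]
  have hset : ∀ i : Fin 2, rowSet f hf.1 i = rowSet f' hf'.1 i := by
    intro i
    ext k
    simp only [rowSet, Finset.mem_filter, Finset.mem_range]
    constructor
    · rintro ⟨hk, hk2, hr⟩; exact ⟨hk, hk2, (hrow k hk2 i).mp hr⟩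
    · rintro ⟨hk, hk2, hr⟩; exact ⟨hk, hk2, (hrow k hk2 i).mpr hr⟩
  apply Subtype.ext
  funext x
  obtain ⟨i, j⟩ := x
  apply Fin.ext
  rw [row_apply_eq_orderEmbOfFin f hf i j, row_apply_eq_orderEmbOfFin f' hf' i j]
  exact emb_congr _ _ (hset i) _ _ j

/-- Number of elements of `s` below the `j`-th smallest element of `s` is `j`. -/
lemma card_filter_lt_orderEmbOfFin (s : Finset ℕ) (h : s.card = n) (j : Fin n) :
    (s.filter (· < s.orderEmbOfFin h j)).card = j := by
  have himg : s.filter (· < s.orderEmbOfFin h j) =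
      (Finset.univ.filter (· < j)).image (s.orderEmbOfFin h) := by
    ext x
    simp only [Finset.mem_filter, Finset.mem_image, Finset.mem_univ, true_and]
    constructor
    · rintro ⟨hxs, hlt⟩
      have : x ∈ Set.range (s.orderEmbOfFin h) := by
        rw [Finset.range_orderEmbOfFin]; exact hxs
      obtain ⟨i, rfl⟩ := this
      exact ⟨i, (s.orderEmbOfFin h).lt_iff_lt.mp hlt, rfl⟩
    · rintro ⟨i, hij, rfl⟩
      exact ⟨Finset.orderEmbOfFin_mem s h i, (s.orderEmbOfFin h).lt_iff_lt.mpr hij⟩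
  rw [himg, Finset.card_image_of_injective _ (s.orderEmbOfFin h).injective]
  have : (Finset.univ.filter (· < j)) = Finset.Iio j := by ext x; simp
  rw [this, Fin.card_Iio]

lemma Phi_surjective : Function.Surjective (Phi (n := n)) := by
  rintro ⟨p, hsl⟩
  obtain ⟨l, hl⟩ : ∃ l : List DyckStep, p.toList = l := ⟨p.toList, rfl⟩
  have hlen : l.length = 2 * n := by
    rw [← hl, ← DyckWord.two_mul_semilength_eq_length, hsl]
  have hcU : ((Finset.range (2 * n)).filter (fun k => l.getD k default = U)).card = n := by
    have h := count_take_card l U (2 * n) (le_of_eq hlen.symm)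
    rw [List.take_of_length_le (le_of_eq hlen)] at h
    rw [← h, ← hl]
    exact hsl
  have hcD : ((Finset.range (2 * n)).filter (fun k => l.getD k default = D)).card = n := by
    have h := count_take_card l D (2 * n) (le_of_eq hlen.symm)
    rw [List.take_of_length_le (le_of_eq hlen)] at h
    rw [← h, ← hl, ← DyckWord.semilength_eq_count_D]
    exact hsl
  set sU : Finset ℕ := (Finset.range (2 * n)).filter (fun k => l.getD k default = U) with hsU
  set sD : Finset ℕ := (Finset.range (2 * n)).filter (fun k => l.getD k default = D) with hsD
  set eU := sU.orderEmbOfFin hcU with heU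
  set eD := sD.orderEmbOfFin hcD with heD
  have hUmem : ∀ j : Fin n, eU j ∈ sU := fun j => Finset.orderEmbOfFin_mem sU hcU j
  have hDmem : ∀ j : Fin n, eD j ∈ sD := fun j => Finset.orderEmbOfFin_mem sD hcD j
  have hUlt : ∀ j : Fin n, eU j < 2 * n := fun j =>
    Finset.mem_range.mp (Finset.mem_filter.mp (hUmem j)).1
  have hDlt : ∀ j : Fin n, eD j < 2 * n := fun j =>
    Finset.mem_range.mp (Finset.mem_filter.mp (hDmem j)).1
  have hUstep : ∀ j : Fin n, l.getD (eU j) default = U := fun j =>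
    (Finset.mem_filter.mp (hUmem j)).2
  have hDstep : ∀ j : Fin n, l.getD (eD j) default = D := fun j =>
    (Finset.mem_filter.mp (hDmem j)).2
  -- ballot: eU j < eD j
  have hballot : ∀ j : Fin n, eU j < eD j := by
    intro j
    by_contra hcon
    push_neg at hcon  -- eD j ≤ eU j
    have hbD : l.getD (eD j) default = D := hDstep j
    have hfilter : (Finset.range (eD j + 1)).filter (fun k => l.getD k default = D) =
        insert (eD j) (sD.filter (· < eD j)) := by
      ext k
      simp only [Finset.mem_filter, Finset.mem_range, Finset.mem_insert, hsD]
      constructor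
      · rintro ⟨hk, hkD⟩
        rcases Nat.lt_succ_iff_lt_or_eq.mp hk with hk' | rfl
        · exact Or.inr ⟨⟨lt_trans hk' (hDlt j), hkD⟩, hk'⟩
        · exact Or.inl rfl
      · rintro (rfl | ⟨⟨_, hkD⟩, hk⟩)
        · exact ⟨Nat.lt_succ_self _, hbD⟩
        · exact ⟨by omega, hkD⟩
    have hcard1 : ((Finset.range (eD j + 1)).filter
        (fun k => l.getD k default = D)).card = j + 1 := by
      rw [hfilter, Finset.card_insert_of_notMem (by simp),
        card_filter_lt_orderEmbOfFin sD hcD j]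
    have hple := p.count_D_le_count_U (eD j + 1)
    rw [hl] at hple
    have hb1 : eD j + 1 ≤ l.length := by rw [hlen]; exact hDlt j
    rw [count_take_card l D (eD j + 1) hb1, count_take_card l U (eD j + 1) hb1,
      hcard1] at hple
    -- the U's in range (eD j + 1) are a subset of sU.filter (· < eU j)
    have hsub : (Finset.range (eD j + 1)).filter (fun k => l.getD k default = U) ⊆
        sU.filter (· < eU j) := by
      intro k hk
      simp only [Finset.mem_filter, Finset.mem_range, hsU] at hk ⊢
      have hkb : k ≠ eD j := by
        rintro rfl
        rw [hk.2] at hbD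
        exact absurd hbD (by decide)
      have hklt : k < eD j := by omega
      exact ⟨⟨by omega, hk.2⟩, by omega⟩
    have hcardU : ((Finset.range (eD j + 1)).filter
        (fun k => l.getD k default = U)).card ≤ j :=
      le_trans (Finset.card_le_card hsub)
        (le_of_eq (card_filter_lt_orderEmbOfFin sU hcU j))
    omega
  -- construct the tableau
  set f : Fin 2 × Fin n → Fin (2 * n) := fun x =>
    if x.1 = 0 then ⟨eU x.2, hUlt x.2⟩ else ⟨eD x.2, hDlt x.2⟩ with hfdef
  have hinj : Function.Injective f := by
    rintro ⟨i, j⟩ ⟨i', j'⟩ hx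
    have hval := congrArg Fin.val hx
    simp only [hfdef] at hval
    have hi : i = 0 ∨ i = 1 := by omega
    have hi' : i' = 0 ∨ i' = 1 := by omega
    rcases hi with rfl | rfl <;> rcases hi' with rfl | rfl <;>
      simp only [show ((0 : Fin 2) = 0) = True by simp,
        show ((1 : Fin 2) = 0) = False by decide, if_true, if_false, Fin.val_mk] at hval
    · exact Prod.ext rfl (eU.injective hval)
    · exfalso
      have h1 : l.getD (eU j) default = U := hUstep j
      have h2 : l.getD (eD j') default = D := hDstep j'
      rw [hval] at h1
      rw [h1] at h2
      exact absurd h2 (by decide)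
    · exfalso
      have h1 : l.getD (eU j') default = U := hUstep j'
      have h2 : l.getD (eD j) default = D := hDstep j
      rw [← hval] at h1
      rw [h1] at h2
      exact absurd h2 (by decide)
    · exact Prod.ext rfl (eD.injective hval)
  have hbij : Function.Bijective f := by
    rw [Fintype.bijective_iff_injective_and_card]
    refine ⟨hinj, ?_⟩
    simp [Fintype.card_prod]
  have hstd : IsStandard2xn n f := by
    refine ⟨hbij, ?_, ?_⟩
    · intro i j j' hjj'
      have hi : i = 0 ∨ i = 1 := by omega
      rcases hi with rfl | rfl
      · simp only [hfdef, if_pos (rfl : (0 : Fin 2) = 0)]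
        rw [Fin.mk_lt_mk]
        exact eU.strictMono hjj'
      · simp only [hfdef, if_neg (show ¬ (1 : Fin 2) = 0 by decide)]
        rw [Fin.mk_lt_mk]
        exact eD.strictMono hjj'
    · intro i i' j hii'
      have h0 : i = 0 := by omega
      have h1 : i' = 1 := by omega
      subst h0; subst h1
      simp only [hfdef, if_pos (rfl : (0 : Fin 2) = 0),
        if_neg (show ¬ (1 : Fin 2) = 0 by decide)]
      rw [Fin.mk_lt_mk]
      exact hballot j
  refine ⟨⟨f, hstd⟩, ?_⟩
  apply Subtype.ext
  apply DyckWord.ext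
  show listOf f hstd.1 = p.toList
  rw [hl]
  apply List.ext_getElem
  · rw [length_listOf, hlen]
  · intro k hk1 hk2
    have hk : k < 2 * n := by rwa [length_listOf] at hk1
    rw [show (listOf f hstd.1)[k] = stepOf f hstd.1 k by simp [listOf]]
    have hx : ((Equiv.ofBijective f hstd.1).symm ⟨k, hk⟩).1 = 0 ∨
        ((Equiv.ofBijective f hstd.1).symm ⟨k, hk⟩).1 = 1 := by omega
    have hfx : f ((Equiv.ofBijective f hstd.1).symm ⟨k, hk⟩) = ⟨k, hk⟩ :=
      (Equiv.ofBijective f hstd.1).apply_symm_apply _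
    have hlget : l[k] = l.getD k default := (List.getD_eq_getElem l default hk2).symm
    rcases hx with hx0 | hx1
    · have hstep : stepOf f hstd.1 k = U := by
        unfold stepOf
        rw [dif_pos hk, if_pos hx0]
      rw [hstep, hlget]
      have hfeq : f (0, ((Equiv.ofBijective f hstd.1).symm ⟨k, hk⟩).2) = ⟨k, hk⟩ := by
        rw [show ((0 : Fin 2), ((Equiv.ofBijective f hstd.1).symm ⟨k, hk⟩).2)
            = (Equiv.ofBijective f hstd.1).symm ⟨k, hk⟩ from Prod.ext hx0.symm rfl]
        exact hfx
      have hkval : eU ((Equiv.ofBijective f hstd.1).symm ⟨k, hk⟩).2 = k := by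
        have := congrArg Fin.val hfeq
        simpa [hfdef] using this
      rw [← hkval, hUstep _]
    · have hstep : stepOf f hstd.1 k = D := by
        unfold stepOf
        rw [dif_pos hk, if_neg (by rw [hx1]; decide)]
      rw [hstep, hlget]
      have hfeq : f (1, ((Equiv.ofBijective f hstd.1).symm ⟨k, hk⟩).2) = ⟨k, hk⟩ := by
        rw [show ((1 : Fin 2), ((Equiv.ofBijective f hstd.1).symm ⟨k, hk⟩).2)
            = (Equiv.ofBijective f hstd.1).symm ⟨k, hk⟩ from Prod.ext hx1.symm rfl]
        exact hfx
      have hkval : eD ((Equiv.ofBijective f hstd.1).symm ⟨k, hk⟩).2 = k := by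
        have := congrArg Fin.val hfeq
        simpa [hfdef, show ¬ (1 : Fin 2) = 0 by decide] using this
      rw [← hkval, hDstep _]

lemma cat_fact (n : ℕ) : catalan n * ((n + 1).factorial * n.factorial) = (2 * n).factorial := by
  have h1 := succ_mul_catalan_eq_centralBinom n
  have h2 := Nat.choose_mul_factorial_mul_factorial (show n ≤ 2 * n by omega)
  rw [Nat.centralBinom] at h1
  have h3 : (2 * n) - n = n := by omega
  rw [h3] at h2
  calc catalan n * ((n + 1).factorial * n.factorial)
      = ((n + 1) * catalan n) * n.factorial * n.factorial := by
        rw [Nat.factorial_succ]; ring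
    _ = (2 * n).choose n * n.factorial * n.factorial := by rw [h1]
    _ = (2 * n).factorial := h2

end SYT2xnAux

/-- The number of standard Young tableaux of shape `2×n` equals the Catalan number
`(2n)!/((n+1)!·n!)`, stated as the exact identity obtained by clearing the denominator. -/
theorem stmt_7 (n : ℕ) (hn : 1 ≤ n) :
    Nat.card {f : Fin 2 × Fin n → Fin (2 * n) // IsStandard2xn n f} *
        ((n + 1).factorial * n.factorial) =
      (2 * n).factorial := by
  have hbij : Function.Bijective (SYT2xnAux.Phi (n := n)) :=
    ⟨SYT2xnAux.Phi_injective, SYT2xnAux.Phi_surjective⟩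
  have hcard : Nat.card {f : Fin 2 × Fin n → Fin (2 * n) // IsStandard2xn n f} = catalan n := by
    rw [Nat.card_eq_of_bijective _ hbij, Nat.card_eq_fintype_card,
      DyckWord.card_dyckWord_semilength_eq_catalan]
  rw [hcard]
  exact SYT2xnAux.cat_fact n
end

section
/- For every natural number n ≥ 1, 2·(3n)! is divisible by n!·(n+1)!·(n+2)!, but (3n)! is not divisible by n!·(n+1)!·(n+2)! when n = 1 (since (3)! = 6 and 1!·2!·3! = 12); hence the factor 2 in the three-dimensional Catalan formula is necessary. -/
private lemma tri_dvd (a b c : ℕ) : a.factorial * b.factorial * c.factorial ∣ (a + b + c).factorial :=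
  dvd_trans (mul_dvd_mul (Nat.factorial_mul_factorial_dvd_factorial_add a b) dvd_rfl)
    (Nat.factorial_mul_factorial_dvd_factorial_add (a + b) c)

/-- (a) For every `n ≥ 1`, `n!·(n+1)!·(n+2)!` divides `2·(3n)!`; but
(b) `1!·2!·3!` does not divide `3!` — so the factor `2` in the three-dimensional
Catalan formula is necessary. -/
theorem stmt_18 :
    (∀ n : ℕ, 1 ≤ n →
        n.factorial * (n + 1).factorial * (n + 2).factorial ∣ 2 * (3 * n).factorial) ∧
      ¬ (Nat.factorial 1 * Nat.factorial 2 * Nat.factorial 3 ∣ Nat.factorial 3) := by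
  constructor
  · intro n hn
    match n, hn with
    | 1, _ => decide
    | (k+2), _ =>
      obtain ⟨A, hA⟩ := tri_dvd (k+2) (k+2) (k+2)
      obtain ⟨B, hB⟩ := tri_dvd (k+3) (k+1) (k+2)
      obtain ⟨C, hC⟩ := tri_dvd (k+4) k (k+2)
      obtain ⟨E, hE⟩ := tri_dvd (k+3) (k+3) k
      obtain ⟨F, hF⟩ := tri_dvd (k+4) (k+1) (k+1)
      have hsum : ∀ a b c : ℕ, a + b + c = 3*k+6 → (a+b+c).factorial = (3*(k+2)).factorial := by
        intro a b c h; rw [h]; ring_nf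
      rw [hsum _ _ _ (by ring)] at hA hB hC hE hF
      rw [← Int.natCast_dvd_natCast]
      refine ⟨(A : ℤ) - 2*B - C + E + F, ?_⟩
      have hA' := congrArg (Nat.cast (R := ℤ)) hA
      have hB' := congrArg (Nat.cast (R := ℤ)) hB
      have hC' := congrArg (Nat.cast (R := ℤ)) hC
      have hE' := congrArg (Nat.cast (R := ℤ)) hE
      have hF' := congrArg (Nat.cast (R := ℤ)) hF
      push_cast at hA' hB' hC' hE' hF' ⊢
      have f1 : ((k+1).factorial : ℤ) = (k+1) * k.factorial := by
        rw [Nat.factorial_succ]; push_cast; ring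
      have f2 : ((k+2).factorial : ℤ) = (k+2) * (k+1).factorial := by
        rw [Nat.factorial_succ]; push_cast; ring
      have f3 : ((k+3).factorial : ℤ) = (k+3) * (k+2).factorial := by
        rw [Nat.factorial_succ]; push_cast; ring
      have f4 : ((k+4).factorial : ℤ) = (k+4) * (k+3).factorial := by
        rw [Nat.factorial_succ]; push_cast; ring
      simp only [f4, f3, f2, f1] at hA' hB' hC' hE' hF' ⊢
      linear_combination
        (((k:ℤ)+3)^2*((k:ℤ)+4)) * hA' - 2*(((k:ℤ)+2)*((k:ℤ)+3)*((k:ℤ)+4)) * hB'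
        - (((k:ℤ)+1)*((k:ℤ)+2)*((k:ℤ)+3)) * hC' + (((k:ℤ)+1)*((k:ℤ)+2)*((k:ℤ)+4)) * hE'
        + (((k:ℤ)+2)^2*((k:ℤ)+3)) * hF'
  · decide
end
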